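/- arXiv:2507.03425 — 4 statements merged into one kernel-verified Lean document; each statement's English description precedes it below -/
import Mathlib

section
/- Two Dunkl derivatives in distinct coordinate directions commute: for i ≠ j, D_i D_j f = D_j D_i f for all smooth functions f on the complement of the coordinate hyperplanes in ℝ^N. -/
open Complex BigOperators Finset Topology

noncomputable section

variable {N : ℕ}

/-- Reflection of the `i`-th coordinate: `σᵢ(x)` flips the sign of `xᵢ`. -/
def flipC (i : Fin N) (x : Fin N → ℝ) : Fin N → ℝ := Function.update x i (-(x i))

/-- The reflection operator `R̂ᵢ f (x) = f (σᵢ x)`. -/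
def Rop (i : Fin N) (f : (Fin N → ℝ) → ℂ) : (Fin N → ℝ) → ℂ := fun x => f (flipC i x)

/-- The Dunkl derivative `Dᵢ f (x) = ∂ᵢ f(x) + (μᵢ/xᵢ)(f(x) - f(σᵢ x))`. -/
def Dop (μ : Fin N → ℝ) (i : Fin N) (f : (Fin N → ℝ) → ℂ) : (Fin N → ℝ) → ℂ :=
  fun x => fderiv ℝ f x (Pi.single i 1) + ((μ i : ℂ) / (x i : ℂ)) * (f x - f (flipC i x))

/-- The Dunkl momentum operator `π̂ᵢ = -iℏ Dᵢ`. -/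
def Pop (μ : Fin N → ℝ) (hb : ℝ) (i : Fin N) (f : (Fin N → ℝ) → ℂ) : (Fin N → ℝ) → ℂ :=
  fun x => -(Complex.I * (hb : ℂ)) * Dop μ i f x

/-- The Dunkl angular momentum operator `Λ̂ᵢⱼ = x̂ᵢ π̂ⱼ - x̂ⱼ π̂ᵢ`. -/
def Lam (μ : Fin N → ℝ) (hb : ℝ) (i j : Fin N) (f : (Fin N → ℝ) → ℂ) : (Fin N → ℝ) → ℂ :=
  fun x => (x i : ℂ) * Pop μ hb j f x - (x j : ℂ) * Pop μ hb i f x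

/-- The complement of the coordinate hyperplanes in `ℝ^N`. -/
def Udom (N : ℕ) : Set (Fin N → ℝ) := {x | ∀ i, x i ≠ 0}


lemma flipC_apply (i : Fin N) (x : Fin N → ℝ) (k : Fin N) :
    flipC i x k = if k = i then -(x i) else x k := Function.update_apply _ _ _ _

lemma isOpen_Udom : IsOpen (Udom N) := by
  have : Udom N = ⋂ i, (fun x : Fin N → ℝ => x i) ⁻¹' {0}ᶜ := by
    ext x; simp [Udom]
  rw [this]
  exact isOpen_iInter_of_finite fun i => isOpen_compl_singleton.preimage (continuous_apply i)

lemma flipC_mem_Udom {x : Fin N → ℝ} (hx : x ∈ Udom N) (i : Fin N) : flipC i x ∈ Udom N := by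
  intro k
  rw [flipC_apply]
  split
  · exact neg_ne_zero.mpr (hx i)
  · exact hx k

lemma flipC_comm (i j : Fin N) (x : Fin N → ℝ) : flipC i (flipC j x) = flipC j (flipC i x) := by
  funext k
  by_cases hij : i = j
  · subst hij; rfl
  · simp only [flipC_apply]
    by_cases h1 : k = i <;> by_cases h2 : k = j <;>
      simp_all [flipC_apply]

def flipLM (i : Fin N) : (Fin N → ℝ) →ₗ[ℝ] (Fin N → ℝ) where
  toFun := flipC i
  map_add' x y := by funext k; simp only [flipC_apply, Pi.add_apply]; split <;> ring
  map_smul' c x := by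
    funext k
    simp only [flipC_apply, Pi.smul_apply, RingHom.id_apply, smul_eq_mul, mul_ite, mul_neg]

def flipL (i : Fin N) : (Fin N → ℝ) →L[ℝ] (Fin N → ℝ) := (flipLM i).toContinuousLinearMap

lemma flipL_apply (i : Fin N) (x : Fin N → ℝ) : flipL i x = flipC i x := rfl

lemma flipL_single (i j : Fin N) (h : j ≠ i) :
    flipL i (Pi.single j 1) = (Pi.single j 1 : Fin N → ℝ) := by
  funext k
  rw [flipL_apply, flipC_apply]
  split
  · next hk =>
    subst hk
    rw [Pi.single_eq_of_ne (Ne.symm h), neg_zero]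
  · rfl

lemma Dop_formula (μ : Fin N → ℝ) (f : (Fin N → ℝ) → ℂ) (hf : ContDiffOn ℝ (⊤ : ℕ∞) f (Udom N))
    (i j : Fin N) (hij : i ≠ j) (x : Fin N → ℝ) (hx : x ∈ Udom N) :
    Dop μ i (Dop μ j f) x =
      fderiv ℝ (fderiv ℝ f) x (Pi.single i 1) (Pi.single j 1)
      + ((μ j : ℂ) / (x j : ℂ)) *
          (fderiv ℝ f x (Pi.single i 1) - fderiv ℝ f (flipC j x) (Pi.single i 1))
      + ((μ i : ℂ) / (x i : ℂ)) *
          (fderiv ℝ f x (Pi.single j 1) - fderiv ℝ f (flipC i x) (Pi.single j 1))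
      + ((μ i : ℂ) / (x i : ℂ)) * ((μ j : ℂ) / (x j : ℂ)) *
          (f x - f (flipC j x) - f (flipC i x) + f (flipC j (flipC i x))) := by
  have hU : IsOpen (Udom N) := isOpen_Udom
  have hmem : Udom N ∈ 𝓝 x := hU.mem_nhds hx
  have hfx : ContDiffAt ℝ (⊤ : ℕ∞) f x := hf.contDiffAt hmem
  have hfd : HasFDerivAt f (fderiv ℝ f x) x := (hfx.differentiableAt (by simp)).hasFDerivAt
  have hf2 : HasFDerivAt (fderiv ℝ f) (fderiv ℝ (fderiv ℝ f) x) x :=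
    ((hfx.fderiv_right (m := 1) (by exact WithTop.coe_le_coe.mpr le_top)).differentiableAt one_ne_zero).hasFDerivAt
  have hA : HasFDerivAt (fun y => fderiv ℝ f y (Pi.single j 1))
      ((fderiv ℝ f x).comp 0 + (fderiv ℝ (fderiv ℝ f) x).flip (Pi.single j 1)) x :=
    hf2.clm_apply (hasFDerivAt_const _ _)
  set q : (Fin N → ℝ) →L[ℝ] ℂ := Complex.ofRealCLM.comp (ContinuousLinearMap.proj j) with hq_def
  have hq : HasFDerivAt (fun y : Fin N → ℝ => ((y j : ℝ) : ℂ)) q x := q.hasFDerivAt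
  have hxj : ((x j : ℝ) : ℂ) ≠ 0 := by
    exact_mod_cast hx j
  have hinv := ((hasFDerivAt_inv hxj).restrictScalars ℝ).comp x hq
  have hh := hinv.const_mul ((μ j : ℝ) : ℂ)
  have hcompflip : HasFDerivAt (fun y => f (flipC j y))
      ((fderiv ℝ f (flipC j x)).comp (flipL j)) x := by
    have h1 : ContDiffAt ℝ (⊤ : ℕ∞) f (flipC j x) :=
      hf.contDiffAt (hU.mem_nhds (flipC_mem_Udom hx j))
    have h2 : HasFDerivAt f (fderiv ℝ f (flipC j x)) (flipL j x) :=
      (h1.differentiableAt (by simp)).hasFDerivAt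
    exact h2.comp x (flipL j).hasFDerivAt
  have hg := hfd.sub hcompflip
  have hB := hh.mul hg
  have htot := hA.add hB
  have hfun : Dop μ j f = fun y =>
      (fderiv ℝ f y (Pi.single j 1)) +
        (((μ j : ℝ) : ℂ) * ((((y j : ℝ) : ℂ))⁻¹)) * (f y - f (flipC j y)) := by
    funext y; simp [Dop, div_eq_mul_inv]
  have hDer : HasFDerivAt (Dop μ j f)
      ((fderiv ℝ f x).comp (0 : (Fin N → ℝ) →L[ℝ] (Fin N → ℝ)) +
        (fderiv ℝ (fderiv ℝ f) x).flip (Pi.single j 1) +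
        (((((μ j : ℝ) : ℂ)) * ((((x j : ℝ) : ℂ))⁻¹)) •
            (fderiv ℝ f x - (fderiv ℝ f (flipC j x)).comp (flipL j)) +
          (f x - f (flipC j x)) •
            (((μ j : ℝ) : ℂ)) • (ContinuousLinearMap.restrictScalars ℝ
              (ContinuousLinearMap.smulRight (1 : ℂ →L[ℂ] ℂ)
                (-((((x j : ℝ) : ℂ)) ^ 2)⁻¹))).comp q)) x := by
    rw [hfun]; exact htot
  have hfderiv := hDer.fderiv
  have hsingle : (Pi.single i 1 : Fin N → ℝ) j = 0 := Pi.single_eq_of_ne (Ne.symm hij) 1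
  have hflipx : flipC i x j = x j := by rw [flipC_apply, if_neg (Ne.symm hij)]
  simp only [Dop, hfderiv]
  simp only [ContinuousLinearMap.add_apply, ContinuousLinearMap.comp_apply,
    ContinuousLinearMap.zero_apply, map_zero, ContinuousLinearMap.flip_apply,
    ContinuousLinearMap.smul_apply, smul_eq_mul, ContinuousLinearMap.sub_apply,
    ContinuousLinearMap.coe_restrictScalars', ContinuousLinearMap.smulRight_apply,
    ContinuousLinearMap.one_apply, ContinuousLinearMap.proj_apply, hq_def,
    Complex.ofRealCLM_apply, hsingle, Complex.ofReal_zero, mul_zero, zero_mul,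
    flipL_single j i hij, hflipx, flipC_apply, if_neg (Ne.symm hij)]
  simp only [div_eq_mul_inv]
  ring

/-- Dunkl derivatives in distinct coordinate directions commute. -/
theorem dunkl_derivatives_commute (N : ℕ) (μ : Fin N → ℝ)
    (f : (Fin N → ℝ) → ℂ) (hf : ContDiffOn ℝ (⊤ : ℕ∞) f (Udom N)) :
    ∀ i j : Fin N, i ≠ j → ∀ x ∈ Udom N,
      Dop μ i (Dop μ j f) x = Dop μ j (Dop μ i f) x := by
  intro i j hij x hx
  have hU : IsOpen (Udom N) := isOpen_Udom
  have hev : ∀ᶠ y in 𝓝 x, HasFDerivAt f (fderiv ℝ f y) y := by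
    filter_upwards [hU.mem_nhds hx] with y hy
    exact ((hf.contDiffAt (hU.mem_nhds hy)).differentiableAt (by simp)).hasFDerivAt
  have hfx : ContDiffAt ℝ (⊤ : ℕ∞) f x := hf.contDiffAt (hU.mem_nhds hx)
  have hf2 : HasFDerivAt (fderiv ℝ f) (fderiv ℝ (fderiv ℝ f) x) x :=
    ((hfx.fderiv_right (m := 1) (by exact WithTop.coe_le_coe.mpr le_top)).differentiableAt one_ne_zero).hasFDerivAt
  have hsymm : fderiv ℝ (fderiv ℝ f) x (Pi.single i 1) (Pi.single j 1) =
      fderiv ℝ (fderiv ℝ f) x (Pi.single j 1) (Pi.single i 1) :=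
    second_derivative_symmetric_of_eventually hev hf2 _ _
  rw [Dop_formula μ f hf i j hij x hx, Dop_formula μ f hf j i hij.symm x hx,
    hsymm, flipC_comm j i]
  ring


end
end

section
/- The operators Ĵ₊ = π̂² + (β + γ R̂)/x², Ĵ₃ = x̂ π̂ − iℏ(1/2 + μ R̂), Ĵ₋ = x̂² in one dimension satisfy the sl(2,ℝ) commutation relations [Ĵ₋, Ĵ₊] = 4iℏ Ĵ₃ and [Ĵ₃, Ĵ±] = ±2iℏ Ĵ±. -/
open Complex

noncomputable section

/-- The reflection operator `(R̂ f)(x) = f(-x)`. -/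
def R1 (f : ℝ → ℂ) : ℝ → ℂ := fun x => f (-x)

/-- The one-dimensional Dunkl derivative `(D f)(x) = f'(x) + (μ/x)(f(x) - f(-x))`. -/
def D1 (μ : ℝ) (f : ℝ → ℂ) : ℝ → ℂ :=
  fun x => deriv f x + ((μ : ℂ) / (x : ℂ)) * (f x - f (-x))

/-- The one-dimensional Dunkl momentum `π̂ = -iℏ D`. -/
def P1 (μ : ℝ) (hb : ℝ) (f : ℝ → ℂ) : ℝ → ℂ :=
  fun x => -(Complex.I * (hb : ℂ)) * D1 μ f x

/-- `Ĵ₊ = π̂² + (β + γ R̂)/x̂²`. -/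
def Jp1 (μ β γ hb : ℝ) (f : ℝ → ℂ) : ℝ → ℂ :=
  fun x => P1 μ hb (P1 μ hb f) x + ((β : ℂ) * f x + (γ : ℂ) * R1 f x) / (x : ℂ) ^ 2

/-- `Ĵ₋ = x̂²`. -/
def Jm1 (f : ℝ → ℂ) : ℝ → ℂ := fun x => (x : ℂ) ^ 2 * f x

/-- `Ĵ₃ = x̂ π̂ - iℏ(1/2 + μ R̂)`. -/
def J31 (μ hb : ℝ) (f : ℝ → ℂ) : ℝ → ℂ :=
  fun x => (x : ℂ) * P1 μ hb f x - Complex.I * (hb : ℂ) * (f x / 2 + (μ : ℂ) * R1 f x)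

lemma hasDerivAt_ofReal (x : ℝ) : HasDerivAt (fun y : ℝ => (y : ℂ)) 1 x := by
  simpa using (hasDerivAt_id x).ofReal_comp

lemma hasDerivAt_ofRealSq (x : ℝ) : HasDerivAt (fun y : ℝ => ((y:ℂ))^2) (2*(x:ℂ)) x := by
  have h := (hasDerivAt_ofReal x).mul (hasDerivAt_ofReal x)
  have he : (fun y : ℝ => ((y:ℂ))^2) = fun y : ℝ => (y:ℂ) * (y:ℂ) := by
    funext y; ring
  rw [he]
  convert h using 1
  · rfl
  · rfl
  ring

lemma hasDerivAt_D1 (μ : ℝ) (g g1 : ℝ → ℂ)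
    (hg : ∀ y : ℝ, y ≠ 0 → HasDerivAt g (g1 y) y)
    (x : ℝ) (hx : x ≠ 0) (g2x : ℂ) (hg1x : HasDerivAt g1 g2x x) :
    HasDerivAt (D1 μ g)
      (g2x - (μ:ℂ)/(x:ℂ)^2 * (g x - g (-x)) + (μ:ℂ)/(x:ℂ) * (g1 x + g1 (-x))) x := by
  have hx' : (-x) ≠ 0 := neg_ne_zero.mpr hx
  have hxC : (x:ℂ) ≠ 0 := by exact_mod_cast hx
  have hneg : HasDerivAt (fun y : ℝ => g (-y)) (-(g1 (-x))) x := by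
    have h1 : HasDerivAt (fun y : ℝ => -y) (-1 : ℝ) x := hasDerivAt_neg x
    have h2 : HasDerivAt g (g1 (-x)) (-x) := hg (-x) hx'
    exact (by simpa using HasDerivAt.scomp (g₁ := g) (h := fun y : ℝ => -y) x h2 h1 :)
  have hdiv : HasDerivAt (fun y : ℝ => (μ:ℂ)/(y:ℂ)) (-((μ:ℂ)/(x:ℂ)^2)) x := by
    have h := (hasDerivAt_const x (μ:ℂ)).div (hasDerivAt_ofReal x) hxC
    convert h using 1
    · rfl
    · rfl
    field_simp
    ring
  have hmain := hg1x.add (hdiv.mul ((hg x hx).sub hneg))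
  have heq : D1 μ g =ᶠ[nhds x] fun y => g1 y + (μ:ℂ)/(y:ℂ) * (g y - g (-y)) := by
    filter_upwards [isOpen_ne.mem_nhds hx] with y hy
    show deriv g y + _ = _
    rw [(hg y hy).deriv]
  have H := hmain.congr_of_eventuallyEq heq
  convert H using 1
  · rfl
  simp only [Pi.sub_apply]
  ring

lemma P1P1_val (μ hb : ℝ) (g g1 g2 : ℝ → ℂ)
    (hg : ∀ y : ℝ, y ≠ 0 → HasDerivAt g (g1 y) y)
    (hg1 : ∀ y : ℝ, y ≠ 0 → HasDerivAt g1 (g2 y) y)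
    (x : ℝ) (hx : x ≠ 0) :
    P1 μ hb (P1 μ hb g) x
      = -(hb:ℂ)^2 * (g2 x + 2*(μ:ℂ)/(x:ℂ) * g1 x - (μ:ℂ)/(x:ℂ)^2 * (g x - g (-x))) := by
  have hx' : (-x) ≠ 0 := neg_ne_zero.mpr hx
  have hxC : (x:ℂ) ≠ 0 := by exact_mod_cast hx
  have hD := hasDerivAt_D1 μ g g1 hg x hx (g2 x) (hg1 x hx)
  have hP : HasDerivAt (P1 μ hb g)
      (-(Complex.I * (hb:ℂ)) *
        (g2 x - (μ:ℂ)/(x:ℂ)^2 * (g x - g (-x)) + (μ:ℂ)/(x:ℂ) * (g1 x + g1 (-x)))) x :=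
    hD.const_mul _
  show -(Complex.I * (hb:ℂ)) *
      (deriv (P1 μ hb g) x + (μ:ℂ)/(x:ℂ) * (P1 μ hb g x - P1 μ hb g (-x))) = _
  rw [hP.deriv]
  show -(Complex.I * (hb:ℂ)) * (_ + (μ:ℂ)/(x:ℂ) *
      (-(Complex.I * (hb:ℂ)) * (deriv g x + (μ:ℂ)/(x:ℂ) * (g x - g (-x)))
        - -(Complex.I * (hb:ℂ)) * (deriv g (-x) + (μ:ℂ)/((-x : ℝ):ℂ) * (g (-x) - g (- -x))))) = _
  rw [(hg x hx).deriv, (hg (-x) hx').deriv, neg_neg]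
  push_cast
  have hI := Complex.I_sq
  linear_combination ((hb:ℂ)^2 * (g2 x + 2*(μ:ℂ)/(x:ℂ) * g1 x - (μ:ℂ)/(x:ℂ)^2 * (g x - g (-x)))) * hI

lemma Jp1_val (μ β γ hb : ℝ) (g g1 g2 : ℝ → ℂ)
    (hg : ∀ y : ℝ, y ≠ 0 → HasDerivAt g (g1 y) y)
    (hg1 : ∀ y : ℝ, y ≠ 0 → HasDerivAt g1 (g2 y) y)
    (x : ℝ) (hx : x ≠ 0) :
    Jp1 μ β γ hb g x
      = (-(hb:ℂ)^2 * ((x:ℂ)^2 * g2 x + 2*(μ:ℂ)*(x:ℂ) * g1 x - (μ:ℂ) * (g x - g (-x)))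
          + ((β:ℂ) * g x + (γ:ℂ) * g (-x))) / (x:ℂ)^2 := by
  have hxC : (x:ℂ) ≠ 0 := by exact_mod_cast hx
  show P1 μ hb (P1 μ hb g) x + ((β:ℂ) * g x + (γ:ℂ) * g (-x)) / (x:ℂ)^2 = _
  rw [P1P1_val μ hb g g1 g2 hg hg1 x hx]
  field_simp

lemma J31_val (μ hb : ℝ) (g : ℝ → ℂ) (x : ℝ) (hx : x ≠ 0) (a : ℂ)
    (hg : HasDerivAt g a x) :
    J31 μ hb g x = -(Complex.I * (hb:ℂ)) * ((x:ℂ) * a + ((μ:ℂ) + 1/2) * g x) := by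
  have hxC : (x:ℂ) ≠ 0 := by exact_mod_cast hx
  show (x:ℂ) * (-(Complex.I * (hb:ℂ)) * (deriv g x + (μ:ℂ)/(x:ℂ) * (g x - g (-x)))) - _ = _
  rw [hg.deriv]
  show _ - Complex.I * (hb:ℂ) * (g x / 2 + (μ:ℂ) * g (-x)) = _
  field_simp
  ring

lemma Jp1_hasDerivAt (μ β γ hb : ℝ) (g g1 g2 g3 : ℝ → ℂ)
    (hg : ∀ y : ℝ, y ≠ 0 → HasDerivAt g (g1 y) y)
    (hg1 : ∀ y : ℝ, y ≠ 0 → HasDerivAt g1 (g2 y) y)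
    (hg2 : ∀ y : ℝ, y ≠ 0 → HasDerivAt g2 (g3 y) y)
    (x : ℝ) (hx : x ≠ 0) :
    HasDerivAt (Jp1 μ β γ hb g)
      ((-(hb:ℂ)^2 * ((x:ℂ)^3 * g3 x + 2*(μ:ℂ)*(x:ℂ)^2 * g2 x - 2*(μ:ℂ)*(x:ℂ) * g1 x
          - (μ:ℂ)*(x:ℂ)*(g1 x + g1 (-x)) + 2*(μ:ℂ)*(g x - g (-x)))
        + (x:ℂ)*((β:ℂ)*g1 x - (γ:ℂ)*g1 (-x))
        - 2*((β:ℂ)*g x + (γ:ℂ)*g (-x))) / (x:ℂ)^3) x := by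
  have hx' : (-x) ≠ 0 := neg_ne_zero.mpr hx
  have hxC : (x:ℂ) ≠ 0 := by exact_mod_cast hx
  have hx2 : ((x:ℝ):ℂ)^2 ≠ 0 := pow_ne_zero _ hxC
  have hyid := hasDerivAt_ofReal x
  have hy2 := hasDerivAt_ofRealSq x
  have hneg : HasDerivAt (fun y : ℝ => g (-y)) (-(g1 (-x))) x := by
    have h1 : HasDerivAt (fun y : ℝ => -y) (-1 : ℝ) x := hasDerivAt_neg x
    exact (by simpa using HasDerivAt.scomp (g₁ := g) (h := fun y : ℝ => -y) x (hg (-x) hx') h1 :)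
  have hA := hy2.mul (hg2 x hx)
  have hB := (hyid.const_mul (2*(μ:ℂ))).mul (hg1 x hx)
  have hC := ((hg x hx).sub hneg).const_mul (μ:ℂ)
  have hbg := ((hg x hx).const_mul (β:ℂ)).add (hneg.const_mul (γ:ℂ))
  have hN := ((((hA.add hB).sub hC).const_mul (-(hb:ℂ)^2)).add hbg).div hy2 hx2
  have heq : Jp1 μ β γ hb g =ᶠ[nhds x]
      fun y => (-(hb:ℂ)^2 * (((y:ℂ))^2 * g2 y + 2*(μ:ℂ)*(y:ℂ) * g1 y - (μ:ℂ) * (g y - g (-y)))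
          + ((β:ℂ) * g y + (γ:ℂ) * g (-y))) / ((y:ℂ))^2 := by
    filter_upwards [isOpen_ne.mem_nhds hx] with y hy
    exact Jp1_val μ β γ hb g g1 g2 hg hg1 y hy
  have H := hN.congr_of_eventuallyEq heq
  convert H using 1
  · rfl
  simp only [Pi.add_apply, Pi.sub_apply, Pi.mul_apply]
  field_simp
  ring

set_option maxHeartbeats 1000000 in
/-- The 1D Dunkl differential-difference realization satisfies the `sl(2,ℝ)` relations
`[Ĵ₋, Ĵ₊] = 4iℏ Ĵ₃` and `[Ĵ₃, Ĵ±] = ±2iℏ Ĵ±`. -/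
theorem dunkl_sl2_realization_1d (μ β γ hb : ℝ) (hbpos : hb > 0)
    (f : ℝ → ℂ) (hf : ContDiffOn ℝ (⊤ : ℕ∞) f {x : ℝ | x ≠ 0}) :
    ∀ x : ℝ, x ≠ 0 →
      (Jm1 (Jp1 μ β γ hb f) x - Jp1 μ β γ hb (Jm1 f) x
          = 4 * Complex.I * (hb : ℂ) * J31 μ hb f x) ∧
      (J31 μ hb (Jp1 μ β γ hb f) x - Jp1 μ β γ hb (J31 μ hb f) x
          = 2 * Complex.I * (hb : ℂ) * Jp1 μ β γ hb f x) ∧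
      (J31 μ hb (Jm1 f) x - Jm1 (J31 μ hb f) x
          = -(2 * Complex.I * (hb : ℂ)) * Jm1 f x) := by
  have hs : IsOpen {x : ℝ | x ≠ 0} := isOpen_ne
  have hf1 : ContDiffOn ℝ (⊤ : ℕ∞) (deriv f) {x : ℝ | x ≠ 0} := hf.deriv_of_isOpen hs (by simp)
  have hf2 : ContDiffOn ℝ (⊤ : ℕ∞) (deriv (deriv f)) {x : ℝ | x ≠ 0} := hf1.deriv_of_isOpen hs (by simp)
  have h0 : ∀ y : ℝ, y ≠ 0 → HasDerivAt f (deriv f y) y := fun y hy =>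
    ((hf.differentiableOn (by simp)).differentiableAt (hs.mem_nhds hy)).hasDerivAt
  have h1 : ∀ y : ℝ, y ≠ 0 → HasDerivAt (deriv f) (deriv (deriv f) y) y := fun y hy =>
    ((hf1.differentiableOn (by simp)).differentiableAt (hs.mem_nhds hy)).hasDerivAt
  have h2 : ∀ y : ℝ, y ≠ 0 → HasDerivAt (deriv (deriv f)) (deriv (deriv (deriv f)) y) y :=
    fun y hy =>
    ((hf2.differentiableOn (by simp)).differentiableAt (hs.mem_nhds hy)).hasDerivAt
  intro x hx
  have hx' : (-x) ≠ 0 := neg_ne_zero.mpr hx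
  have hxC : (x:ℂ) ≠ 0 := by exact_mod_cast hx
  have hJm : ∀ y : ℝ, y ≠ 0 →
      HasDerivAt (Jm1 f) (2*(y:ℂ)*f y + ((y:ℂ))^2 * deriv f y) y := by
    intro y hy
    have hy2 := hasDerivAt_ofRealSq y
    have h := hy2.mul (h0 y hy)
    convert h using 1
    · rfl
    · rfl
  have hJm1 : ∀ y : ℝ, y ≠ 0 →
      HasDerivAt (fun z : ℝ => 2*(z:ℂ)*f z + ((z:ℂ))^2 * deriv f z)
        (2*f y + 4*(y:ℂ)*deriv f y + ((y:ℂ))^2 * deriv (deriv f) y) y := by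
    intro y hy
    have hy2 := hasDerivAt_ofRealSq y
    have hy1 : HasDerivAt (fun z : ℝ => 2*(z:ℂ)) (2:ℂ) y := by
      have h := (hasDerivAt_ofReal y).const_mul (2:ℂ)
      convert h using 1
      · rfl
      ring
    have h := (hy1.mul (h0 y hy)).add (hy2.mul (h1 y hy))
    convert h using 1
    · rfl
    · rfl
    ring
  have hK : ∀ y : ℝ, y ≠ 0 →
      HasDerivAt (J31 μ hb f)
        (-(Complex.I*(hb:ℂ)) * ((y:ℂ) * deriv (deriv f) y + ((μ:ℂ)+3/2) * deriv f y)) y := by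
    intro y hy
    have heq : J31 μ hb f =ᶠ[nhds y]
        fun z => -(Complex.I*(hb:ℂ)) * ((z:ℂ) * deriv f z + ((μ:ℂ)+1/2) * f z) := by
      filter_upwards [isOpen_ne.mem_nhds hy] with z hz
      exact J31_val μ hb f z hz _ (h0 z hz)
    have h := (((hasDerivAt_ofReal y).mul (h1 y hy)).add
      ((h0 y hy).const_mul ((μ:ℂ)+1/2))).const_mul (-(Complex.I*(hb:ℂ)))
    have H := h.congr_of_eventuallyEq heq
    convert H using 1
    · rfl
    ring
  have hK1 : ∀ y : ℝ, y ≠ 0 →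
      HasDerivAt (fun z : ℝ => -(Complex.I*(hb:ℂ)) * ((z:ℂ) * deriv (deriv f) z
          + ((μ:ℂ)+3/2) * deriv f z))
        (-(Complex.I*(hb:ℂ)) * ((y:ℂ) * deriv (deriv (deriv f)) y
          + ((μ:ℂ)+5/2) * deriv (deriv f) y)) y := by
    intro y hy
    have h := (((hasDerivAt_ofReal y).mul (h2 y hy)).add
      ((h1 y hy).const_mul ((μ:ℂ)+3/2))).const_mul (-(Complex.I*(hb:ℂ)))
    convert h using 1
    · rfl
    · rfl
    ring
  refine ⟨?_, ?_, ?_⟩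
  · rw [show Jm1 (Jp1 μ β γ hb f) x = (x:ℂ)^2 * Jp1 μ β γ hb f x from rfl,
        Jp1_val μ β γ hb f (deriv f) (deriv (deriv f)) h0 h1 x hx,
        Jp1_val μ β γ hb (Jm1 f) _ _ hJm hJm1 x hx,
        J31_val μ hb f x hx _ (h0 x hx)]
    have h4 : ∀ W : ℂ, 4 * Complex.I * (hb:ℂ) * (-(Complex.I * (hb:ℂ)) * W)
        = 4 * (hb:ℂ)^2 * W := by
      intro W
      linear_combination (-(4 * (hb:ℂ)^2 * W)) * Complex.I_sq
    rw [h4]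
    simp only [Jm1]
    push_cast
    field_simp
    ring
  · rw [J31_val μ hb (Jp1 μ β γ hb f) x hx _
          (Jp1_hasDerivAt μ β γ hb f (deriv f) (deriv (deriv f)) (deriv (deriv (deriv f)))
            h0 h1 h2 x hx),
        Jp1_val μ β γ hb (J31 μ hb f) _ _ hK hK1 x hx,
        Jp1_val μ β γ hb f (deriv f) (deriv (deriv f)) h0 h1 x hx,
        J31_val μ hb f x hx _ (h0 x hx),
        J31_val μ hb f (-x) hx' _ (h0 (-x) hx')]
    push_cast
    field_simp
    ring_nf
  · rw [J31_val μ hb (Jm1 f) x hx _ (hJm x hx),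
        show Jm1 (J31 μ hb f) x = (x:ℂ)^2 * J31 μ hb f x from rfl,
        J31_val μ hb f x hx _ (h0 x hx)]
    simp only [Jm1]
    ring

end
end

section
/- The Casimir element of the one-dimensional Dunkl realization of sl(2,ℝ) equals a reflection-dependent constant: (1/2)(Ĵ₊Ĵ₋ + Ĵ₋Ĵ₊) − Ĵ₃² = −ℏ²(3/4 − μ(μ − R̂)) + β + γ R̂. -/
open Complex

noncomputable section

set_option maxHeartbeats 1600000 in
/-- The Casimir of the 1D Dunkl realization of `sl(2,ℝ)`:
`(1/2)(Ĵ₊Ĵ₋ + Ĵ₋Ĵ₊) - Ĵ₃² = (iℏ)²(3/4 - μ(μ - R̂)) + β + γ R̂`. -/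
theorem dunkl_sl2_casimir_1d (μ β γ hb : ℝ) (hbpos : hb > 0)
    (f : ℝ → ℂ) (hf : ContDiffOn ℝ (⊤ : ℕ∞) f {x : ℝ | x ≠ 0}) :
    ∀ x : ℝ, x ≠ 0 →
      (1 / 2 : ℂ) * (Jp1 μ β γ hb (Jm1 f) x + Jm1 (Jp1 μ β γ hb f) x)
          - J31 μ hb (J31 μ hb f) x
        = (Complex.I * (hb : ℂ)) ^ 2 *
            ((3 / 4 : ℂ) * f x - (μ : ℂ) * ((μ : ℂ) * f x - R1 f x))
          + (β : ℂ) * f x + (γ : ℂ) * R1 f x := by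
  intro x hx
  have hs : IsOpen {x : ℝ | x ≠ 0} := isOpen_ne
  have hx' : (-x : ℝ) ≠ 0 := neg_ne_zero.2 hx
  have hxC : (x : ℂ) ≠ 0 := Complex.ofReal_ne_zero.2 hx
  have hdf : ∀ y : ℝ, y ≠ 0 → HasDerivAt f (deriv f y) y := fun y hy =>
    ((hf.differentiableOn (by simp)).differentiableAt (hs.mem_nhds hy)).hasDerivAt
  have hc1 : ContDiffOn ℝ (⊤ : ℕ∞) (deriv f) {x : ℝ | x ≠ 0} := hf.deriv_of_isOpen hs (by simp)
  have hdf1 : ∀ y : ℝ, y ≠ 0 → HasDerivAt (deriv f) (deriv (deriv f) y) y := fun y hy =>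
    ((hc1.differentiableOn (by simp)).differentiableAt (hs.mem_nhds hy)).hasDerivAt
  have hRf : ∀ y : ℝ, y ≠ 0 → HasDerivAt (fun z : ℝ => f (-z)) (-(deriv f (-y))) y := by
    intro y hy
    simpa [Function.comp_def] using HasDerivAt.scomp y (hdf (-y) (neg_ne_zero.2 hy)) (hasDerivAt_neg y)
  have hcoe : ∀ y : ℝ, HasDerivAt (fun z : ℝ => (z : ℂ)) 1 y := by
    intro y
    simpa using (hasDerivAt_id ((y : ℝ) : ℂ)).comp_ofReal
  have hμdiv : ∀ y : ℝ, y ≠ 0 →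
      HasDerivAt (fun z : ℝ => (μ : ℂ) / (z : ℂ)) ((0 * y - μ * 1) / (y : ℂ) ^ 2) y := by
    intro y hy
    exact (hasDerivAt_const y (μ : ℂ)).div (hcoe y) (by exact_mod_cast hy)
  have hJm : ∀ y : ℝ, y ≠ 0 →
      HasDerivAt (Jm1 f) (2 * (y : ℂ) * f y + (y : ℂ) ^ 2 * deriv f y) y := by
    intro y hy
    have h := ((hasDerivAt_pow 2 ((y : ℝ) : ℂ)).comp_ofReal).mul (hdf y hy)
    have h2 : HasDerivAt (fun z : ℝ => (z : ℂ) ^ 2 * f z)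
        (2 * (y : ℂ) * f y + (y : ℂ) ^ 2 * deriv f y) y := by
      refine h.congr_deriv ?_
      push_cast
      ring
    exact h2
  -- derivative of D1 μ f at any y ≠ 0
  have hD1 : ∀ y : ℝ, y ≠ 0 → HasDerivAt (D1 μ f)
      (deriv (deriv f) y +
        ((0 * y - μ * 1) / (y : ℂ) ^ 2 * (f y - f (-y)) +
          (μ : ℂ) / (y : ℂ) * (deriv f y - -(deriv f (-y))))) y := by
    intro y hy
    exact (hdf1 y hy).add ((hμdiv y hy).mul ((hdf y hy).sub (hRf y hy)))
  have hP1f_x := (hD1 x hx).const_mul (-(Complex.I * (hb : ℂ)))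
  have e1 : deriv (Jm1 f) x = _ := (hJm x hx).deriv
  have e2 : deriv (Jm1 f) (-x) = _ := (hJm (-x) hx').deriv
  have e3 : deriv (P1 μ hb f) x = _ := hP1f_x.deriv
  -- deriv (P1 μ hb (Jm1 f)) x
  have hderivJm : HasDerivAt (fun y : ℝ => deriv (Jm1 f) y)
      (2 * f x + 2 * (x : ℂ) * deriv f x +
        (2 * (x : ℂ) * deriv f x + (x : ℂ) ^ 2 * deriv (deriv f) x)) x := by
    have hcomb : HasDerivAt (fun y : ℝ => 2 * (y : ℂ) * f y + (y : ℂ) ^ 2 * deriv f y)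
        (2 * f x + 2 * (x : ℂ) * deriv f x +
          (2 * (x : ℂ) * deriv f x + (x : ℂ) ^ 2 * deriv (deriv f) x)) x := by
      have ha := (((hcoe x).const_mul (2 : ℂ)).mul (hdf x hx))
      have hb2 := ((hasDerivAt_pow 2 ((x : ℝ) : ℂ)).comp_ofReal).mul (hdf1 x hx)
      refine (ha.add hb2).congr_deriv ?_
      push_cast
      ring
    exact hcomb.congr_of_eventuallyEq
      (Filter.eventuallyEq_of_mem (hs.mem_nhds hx) (fun y hy => (hJm y hy).deriv))
  have hJmneg := HasDerivAt.scomp x (hJm (-x) hx') (hasDerivAt_neg x)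
  have hP1Jm := (hderivJm.add ((hμdiv x hx).mul ((hJm x hx).sub hJmneg))).const_mul
    (-(Complex.I * (hb : ℂ)))
  have e4 : deriv (P1 μ hb (Jm1 f)) x = _ := hP1Jm.deriv
  -- deriv (J31 μ hb f) x
  have hJ3 := ((hcoe x).mul hP1f_x).sub
    ((((hdf x hx).div_const 2).add ((hRf x hx).const_mul (μ : ℂ))).const_mul
      (Complex.I * (hb : ℂ)))
  have e5 : deriv (J31 μ hb f) x = _ := hJ3.deriv
  simp only [Jp1, Jm1, J31, P1, D1, R1, neg_neg]
  rw [e1, e2, e3, e4, e5]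
  simp only [Jm1, D1, R1, Function.comp, Pi.sub_apply, neg_smul, one_smul, neg_neg]
  push_cast
  ring_nf
  field_simp [hxC]
  ring_nf

end
end

section
/- The Dunkl angular momentum operators Λ̂_{ij} = x̂ᵢπ̂ⱼ − x̂ⱼπ̂ᵢ satisfy [Λ̂_{ij}, Λ̂_{kl}] = iℏ(δ_{ik}(1 + 2μ_k R̂_k)Λ̂_{jl} + δ_{jl}(1 + 2μ_l R̂_l)Λ̂_{ik} − δ_{il}(1 + 2μ_i R̂_i)Λ̂_{jk} − δ_{jk}(1 + 2μ_j R̂_j)Λ̂_{il}). -/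
open Complex BigOperators Finset

noncomputable section

variable {N : ℕ}

namespace DunklAux

lemma isOpen_Udom : IsOpen (Udom N) := by
  have : Udom N = ⋂ i, (fun x : Fin N → ℝ => x i) ⁻¹' {0}ᶜ := by
    ext x; simp [Udom]
  rw [this]
  exact isOpen_iInter_of_finite fun i => isOpen_compl_singleton.preimage (continuous_apply i)

/-- Reflection as a continuous linear map. -/
def LC (i : Fin N) : (Fin N → ℝ) →L[ℝ] (Fin N → ℝ) :=
  ContinuousLinearMap.pi
    (fun j => if j = i then -(ContinuousLinearMap.proj i) else ContinuousLinearMap.proj j)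

lemma flipC_apply (i : Fin N) (x : Fin N → ℝ) (j : Fin N) :
    flipC i x j = if j = i then -(x i) else x j := by
  simp [flipC, Function.update_apply]

lemma LC_apply (i : Fin N) (x : Fin N → ℝ) : LC i x = flipC i x := by
  ext j
  simp [LC, flipC_apply, ContinuousLinearMap.pi_apply]
  split_ifs <;> simp

lemma flipC_mem (i : Fin N) {x : Fin N → ℝ} (hx : x ∈ Udom N) : flipC i x ∈ Udom N := by
  intro j
  rw [flipC_apply]
  split_ifs <;> simp [hx _]

lemma flipC_flipC (i j : Fin N) (x : Fin N → ℝ) : flipC i (flipC j x) = flipC j (flipC i x) := by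
  rcases eq_or_ne i j with rfl | hij
  · rfl
  · ext m
    simp only [flipC_apply]
    split_ifs with h1 h2 <;> simp_all [flipC_apply, hij.symm]

lemma LC_single (i j : Fin N) :
    LC i (Pi.single j (1:ℝ)) = if j = i then -(Pi.single j (1:ℝ)) else Pi.single j (1:ℝ) := by
  rw [LC_apply]
  ext m
  rw [flipC_apply]
  rcases eq_or_ne j i with rfl | hij
  · simp [Pi.single_apply]
    split_ifs <;> simp_all
  · simp only [if_neg hij]
    rcases eq_or_ne m i with rfl | hmi
    · simp [Pi.single_apply, hij.symm, Ne.symm hij]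
    · simp [if_neg hmi]

/-- coordinate as a complex-valued CLM -/
def coordC (i : Fin N) : (Fin N → ℝ) →L[ℝ] ℂ :=
  Complex.ofRealCLM.comp (ContinuousLinearMap.proj i)

lemma coordC_apply (i : Fin N) (x : Fin N → ℝ) : coordC i x = ((x i : ℝ) : ℂ) := rfl

lemma diffAt {g : (Fin N → ℝ) → ℂ} (hg : ContDiffOn ℝ (⊤:ℕ∞) g (Udom N)) {x : Fin N → ℝ}
    (hx : x ∈ Udom N) : DifferentiableAt ℝ g x :=
  (hg.differentiableOn (by simp)).differentiableAt (isOpen_Udom.mem_nhds hx)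

lemma smooth_fderiv {g : (Fin N → ℝ) → ℂ} (hg : ContDiffOn ℝ (⊤:ℕ∞) g (Udom N)) :
    ContDiffOn ℝ (⊤:ℕ∞) (fderiv ℝ g) (Udom N) :=
  hg.fderiv_of_isOpen isOpen_Udom (by exact_mod_cast le_top)

lemma diffAt_fderiv {g : (Fin N → ℝ) → ℂ} (hg : ContDiffOn ℝ (⊤:ℕ∞) g (Udom N)) {x : Fin N → ℝ}
    (hx : x ∈ Udom N) : DifferentiableAt ℝ (fderiv ℝ g) x :=
  ((smooth_fderiv hg).differentiableOn (by simp)).differentiableAt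
    (isOpen_Udom.mem_nhds hx)

lemma smooth_comp_flip {g : (Fin N → ℝ) → ℂ} (hg : ContDiffOn ℝ (⊤:ℕ∞) g (Udom N)) (i : Fin N) :
    ContDiffOn ℝ (⊤:ℕ∞) (fun y => g (flipC i y)) (Udom N) := by
  have h : (fun y => g (flipC i y)) = g ∘ (LC i) := by
    funext y; simp [LC_apply]
  rw [h]
  exact hg.comp ((LC i).contDiff.contDiffOn)
    (fun y hy => by show LC i y ∈ Udom N; rw [LC_apply]; exact flipC_mem i hy)

lemma smooth_coeff (μ : Fin N → ℝ) (i : Fin N) :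
    ContDiffOn ℝ (⊤:ℕ∞) (fun y : Fin N → ℝ => ((μ i : ℂ) / (y i : ℂ))) (Udom N) := by
  have hc : ContDiffOn ℝ (⊤:ℕ∞) (fun y : Fin N → ℝ => ((y i : ℝ) : ℂ)) (Udom N) :=
    (coordC i).contDiff.contDiffOn
  have hinv : ContDiffOn ℝ (⊤:ℕ∞) (fun y : Fin N → ℝ => (((y i : ℝ) : ℂ))⁻¹) (Udom N) :=
    hc.inv (fun y hy => Complex.ofReal_ne_zero.mpr (hy i))
  have := contDiffOn_const (c := (μ i : ℂ)) (s := Udom N) (𝕜 := ℝ)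
    (n := ((⊤:ℕ∞) : WithTop ℕ∞)) |>.mul hinv
  simpa only [div_eq_mul_inv] using this

lemma smooth_Dop (μ : Fin N → ℝ) (i : Fin N) {g : (Fin N → ℝ) → ℂ}
    (hg : ContDiffOn ℝ (⊤:ℕ∞) g (Udom N)) :
    ContDiffOn ℝ (⊤:ℕ∞) (Dop μ i g) (Udom N) := by
  have h1 : ContDiffOn ℝ (⊤:ℕ∞) (fun y => fderiv ℝ g y (Pi.single i 1)) (Udom N) :=
    (smooth_fderiv hg).clm_apply contDiffOn_const
  exact h1.add ((smooth_coeff μ i).mul (hg.sub (smooth_comp_flip hg i)))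

/-- the operator L_{ij} = x_i D_j - x_j D_i -/
def Wop (μ : Fin N → ℝ) (i j : Fin N) (g : (Fin N → ℝ) → ℂ) : (Fin N → ℝ) → ℂ :=
  fun x => (x i : ℂ) * Dop μ j g x - (x j : ℂ) * Dop μ i g x

lemma smooth_Wop (μ : Fin N → ℝ) (i j : Fin N) {g : (Fin N → ℝ) → ℂ}
    (hg : ContDiffOn ℝ (⊤:ℕ∞) g (Udom N)) :
    ContDiffOn ℝ (⊤:ℕ∞) (Wop μ i j g) (Udom N) :=
  (((coordC i).contDiff.contDiffOn).mul (smooth_Dop μ j hg)).sub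
    (((coordC j).contDiff.contDiffOn).mul (smooth_Dop μ i hg))

lemma fderiv_Dop_apply (μ : Fin N → ℝ) (i j : Fin N) {g : (Fin N → ℝ) → ℂ}
    (hg : ContDiffOn ℝ (⊤:ℕ∞) g (Udom N)) {x : Fin N → ℝ} (hx : x ∈ Udom N) :
    fderiv ℝ (Dop μ i g) x (Pi.single j 1)
      = fderiv ℝ (fderiv ℝ g) x (Pi.single j 1) (Pi.single i 1)
        + ((μ i : ℂ) / (x i : ℂ)) *
            (fderiv ℝ g x (Pi.single j 1) - fderiv ℝ g (flipC i x) (LC i (Pi.single j 1)))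
        - (if i = j then ((μ i : ℂ) / ((x i : ℂ))^2) * (g x - g (flipC i x)) else 0) := by
  have hx0 : ((x i : ℝ) : ℂ) ≠ 0 := Complex.ofReal_ne_zero.mpr (hx i)
  have hg2 := (diffAt_fderiv hg hx).hasFDerivAt
  have h1 : HasFDerivAt (fun y => fderiv ℝ g y (Pi.single i 1))
      ((ContinuousLinearMap.apply ℝ ℂ (Pi.single i 1)).comp (fderiv ℝ (fderiv ℝ g) x)) x := by
    have h := ((ContinuousLinearMap.apply ℝ ℂ (Pi.single i (1:ℝ))).hasFDerivAt).comp x hg2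
    exact h
  have hinv : HasFDerivAt (fun y : Fin N → ℝ => (((y i : ℝ) : ℂ))⁻¹)
      ((-(ContinuousLinearMap.mulLeftRight ℝ ℂ (((x i : ℝ) : ℂ))⁻¹ (((x i : ℝ) : ℂ))⁻¹)).comp
        (coordC i)) x :=
    (hasFDerivAt_inv' hx0).comp x (coordC i).hasFDerivAt
  have h2 : HasFDerivAt (fun y : Fin N → ℝ => (μ i : ℂ) / ((y i : ℝ) : ℂ))
      ((μ i : ℂ) • ((-(ContinuousLinearMap.mulLeftRight ℝ ℂ (((x i : ℝ) : ℂ))⁻¹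
        (((x i : ℝ) : ℂ))⁻¹)).comp (coordC i))) x := by
    simpa only [div_eq_mul_inv] using hinv.const_mul ((μ i : ℂ))
  have hgx := (diffAt hg hx).hasFDerivAt
  have hflip : HasFDerivAt (fun y => g (flipC i y)) ((fderiv ℝ g (flipC i x)).comp (LC i)) x := by
    have h0 : HasFDerivAt g (fderiv ℝ g (flipC i x)) (LC i x) := by
      rw [LC_apply]; exact (diffAt hg (flipC_mem i hx)).hasFDerivAt
    exact (h0.comp x (LC i).hasFDerivAt).congr_of_eventuallyEq
      (Filter.Eventually.of_forall fun y => by simp [Function.comp, LC_apply])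
  have h3 := hgx.sub hflip
  have h4 := h2.mul h3
  have htot := h1.add h4
  have hD : HasFDerivAt (Dop μ i g) _ x := htot
  rw [hD.fderiv]
  simp only [ContinuousLinearMap.add_apply, ContinuousLinearMap.comp_apply,
    ContinuousLinearMap.smul_apply, ContinuousLinearMap.apply_apply,
    ContinuousLinearMap.sub_apply, ContinuousLinearMap.neg_apply,
    ContinuousLinearMap.mulLeftRight_apply, coordC_apply, smul_eq_mul, Pi.single_apply]
  push_cast
  split_ifs with h
  · subst h; field_simp; simp only [Pi.sub_apply, Complex.ofReal_one]; ring
  · simp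

lemma Dop_sub (μ : Fin N → ℝ) (a : Fin N) {g h : (Fin N → ℝ) → ℂ} {x : Fin N → ℝ}
    (hg : DifferentiableAt ℝ g x) (hh : DifferentiableAt ℝ h x) :
    Dop μ a (fun y => g y - h y) x = Dop μ a g x - Dop μ a h x := by
  simp only [Dop]
  rw [fderiv_fun_sub hg hh]
  simp only [ContinuousLinearMap.sub_apply]
  ring

lemma Dop_const_mul (μ : Fin N → ℝ) (a : Fin N) (c : ℂ) {g : (Fin N → ℝ) → ℂ} {x : Fin N → ℝ}
    (hg : DifferentiableAt ℝ g x) :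
    Dop μ a (fun y => c * g y) x = c * Dop μ a g x := by
  simp only [Dop]
  rw [fderiv_const_mul hg]
  simp only [ContinuousLinearMap.smul_apply, smul_eq_mul]
  ring

lemma Dop_coord_mul (μ : Fin N → ℝ) (a b : Fin N) {g : (Fin N → ℝ) → ℂ}
    (hg : ContDiffOn ℝ (⊤:ℕ∞) g (Udom N)) {x : Fin N → ℝ} (hx : x ∈ Udom N) :
    Dop μ a (fun y => ((y b : ℝ) : ℂ) * g y) x
      = (if a = b then g x + 2 * (μ a : ℂ) * g (flipC a x) else 0)
        + ((x b : ℝ) : ℂ) * Dop μ a g x := by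
  have hgx := (diffAt hg hx).hasFDerivAt
  have hc : HasFDerivAt (fun y : Fin N → ℝ => ((y b : ℝ) : ℂ)) (coordC b) x :=
    (coordC b).hasFDerivAt
  have hm := hc.mul hgx
  have e1 : Dop μ a (fun y => ((y b : ℝ) : ℂ) * g y) x
      = fderiv ℝ (fun y => ((y b : ℝ) : ℂ) * g y) x (Pi.single a 1)
        + ((μ a : ℂ) / (x a : ℂ)) *
          (((x b : ℝ) : ℂ) * g x - ((flipC a x b : ℝ) : ℂ) * g (flipC a x)) := rfl
  rw [e1, show (fun y => ((y b : ℝ) : ℂ) * g y) = (fun y : Fin N → ℝ => ((y b : ℝ) : ℂ)) * g from rfl, hm.fderiv]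
  simp only [ContinuousLinearMap.add_apply, ContinuousLinearMap.smul_apply, coordC_apply,
    smul_eq_mul, Pi.single_apply, flipC_apply, Dop]
  rcases eq_or_ne a b with rfl | hab
  · have hxa : ((x a : ℝ) : ℂ) ≠ 0 := Complex.ofReal_ne_zero.mpr (hx a)
    simp only [if_pos rfl]
    push_cast
    field_simp
    ring
  · simp only [if_neg hab, if_neg (Ne.symm hab)]
    push_cast
    ring

lemma Dop_comm (μ : Fin N → ℝ) {f : (Fin N → ℝ) → ℂ} (hf : ContDiffOn ℝ (⊤:ℕ∞) f (Udom N))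
    (a b : Fin N) {x : Fin N → ℝ} (hx : x ∈ Udom N) :
    Dop μ a (Dop μ b f) x = Dop μ b (Dop μ a f) x := by
  rcases eq_or_ne a b with rfl | hab
  · rfl
  have hsym : fderiv ℝ (fderiv ℝ f) x (Pi.single a 1) (Pi.single b 1)
      = fderiv ℝ (fderiv ℝ f) x (Pi.single b 1) (Pi.single a 1) := by
    have hct : ContDiffAt ℝ ((⊤:ℕ∞) : WithTop ℕ∞) f x := hf.contDiffAt (isOpen_Udom.mem_nhds hx)
    exact (hct.isSymmSndFDerivAt (by rw [minSmoothness_of_isRCLikeNormedField]; exact WithTop.coe_le_coe.mpr (le_top : (2:ℕ∞) ≤ ⊤))) _ _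
  have e1 : Dop μ a (Dop μ b f) x
      = fderiv ℝ (Dop μ b f) x (Pi.single a 1)
        + ((μ a : ℂ) / (x a : ℂ)) * (Dop μ b f x - Dop μ b f (flipC a x)) := rfl
  have e2 : Dop μ b (Dop μ a f) x
      = fderiv ℝ (Dop μ a f) x (Pi.single b 1)
        + ((μ b : ℂ) / (x b : ℂ)) * (Dop μ a f x - Dop μ a f (flipC b x)) := rfl
  have db : ∀ y, Dop μ b f y
      = fderiv ℝ f y (Pi.single b 1) + ((μ b : ℂ) / (y b : ℂ)) * (f y - f (flipC b y)) :=
    fun _ => rfl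
  have da : ∀ y, Dop μ a f y
      = fderiv ℝ f y (Pi.single a 1) + ((μ a : ℂ) / (y a : ℂ)) * (f y - f (flipC a y)) :=
    fun _ => rfl
  rw [e1, e2, fderiv_Dop_apply μ b a hf hx, fderiv_Dop_apply μ a b hf hx,
    db x, db (flipC a x), da x, da (flipC b x)]
  rw [LC_single, LC_single, if_neg hab, if_neg (Ne.symm hab), if_neg hab, if_neg (Ne.symm hab)]
  have cab : ((flipC a x b : ℝ) : ℂ) = ((x b : ℝ) : ℂ) := by
    rw [flipC_apply, if_neg (Ne.symm hab)]
  have cba : ((flipC b x a : ℝ) : ℂ) = ((x a : ℝ) : ℂ) := by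
    rw [flipC_apply, if_neg hab]
  rw [cab, cba, flipC_flipC b a, hsym]
  ring

lemma flipC_coordC (p j : Fin N) (x : Fin N → ℝ) :
    ((flipC p x j : ℝ) : ℂ) = if j = p then -((x p : ℝ) : ℂ) else ((x j : ℝ) : ℂ) := by
  rw [flipC_apply]
  split_ifs <;> push_cast <;> ring

lemma Dop_Wop (μ : Fin N → ℝ) {f : (Fin N → ℝ) → ℂ} (hf : ContDiffOn ℝ (⊤:ℕ∞) f (Udom N))
    (a b c : Fin N) {x : Fin N → ℝ} (hx : x ∈ Udom N) :
    Dop μ a (Wop μ b c f) x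
      = (if a = b then Dop μ c f x + 2 * ((μ a : ℝ) : ℂ) * Dop μ c f (flipC a x) else 0)
        + ((x b : ℝ) : ℂ) * Dop μ a (Dop μ c f) x
        - (if a = c then Dop μ b f x + 2 * ((μ a : ℝ) : ℂ) * Dop μ b f (flipC a x) else 0)
        - ((x c : ℝ) : ℂ) * Dop μ a (Dop μ b f) x := by
  have h1 : DifferentiableAt ℝ (fun y => ((y b : ℝ) : ℂ) * Dop μ c f y) x :=
    diffAt (((coordC b).contDiff.contDiffOn).mul (smooth_Dop μ c hf)) hx
  have h2 : DifferentiableAt ℝ (fun y => ((y c : ℝ) : ℂ) * Dop μ b f y) x :=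
    diffAt (((coordC c).contDiff.contDiffOn).mul (smooth_Dop μ b hf)) hx
  have e : Wop μ b c f = fun y => ((y b : ℝ) : ℂ) * Dop μ c f y - ((y c : ℝ) : ℂ) * Dop μ b f y :=
    rfl
  rw [e, Dop_sub μ a h1 h2, Dop_coord_mul μ a b (smooth_Dop μ c hf) hx,
    Dop_coord_mul μ a c (smooth_Dop μ b hf) hx]
  ring

lemma key_alg (X A μC : Fin N → ℂ) (B C : Fin N → Fin N → ℂ)
    (hC : ∀ p q, C p q = C q p) (i j k l : Fin N) :
    (X i * ((if j = k then A l + 2*μC j * B j l else 0) + X k * C j l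
            - (if j = l then A k + 2*μC j * B j k else 0) - X l * C j k)
     - X j * ((if i = k then A l + 2*μC i * B i l else 0) + X k * C i l
            - (if i = l then A k + 2*μC i * B i k else 0) - X l * C i k))
    - (X k * ((if l = i then A j + 2*μC l * B l j else 0) + X i * C l j
            - (if l = j then A i + 2*μC l * B l i else 0) - X j * C l i)
     - X l * ((if k = i then A j + 2*μC k * B k j else 0) + X i * C k j
            - (if k = j then A i + 2*μC k * B k i else 0) - X j * C k i))
    = -((if i = k then (X j * A l - X l * A j)
            + 2*μC k * ((if j = k then -(X k) else X j) * B k l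
              - (if l = k then -(X k) else X l) * B k j) else 0)
      + (if j = l then (X i * A k - X k * A i)
            + 2*μC l * ((if i = l then -(X l) else X i) * B l k
              - (if k = l then -(X l) else X k) * B l i) else 0)
      - (if i = l then (X j * A k - X k * A j)
            + 2*μC i * ((if j = i then -(X i) else X j) * B i k
              - (if k = i then -(X i) else X k) * B i j) else 0)
      - (if j = k then (X i * A l - X l * A i)
            + 2*μC j * ((if i = j then -(X j) else X i) * B j l
              - (if l = j then -(X j) else X l) * B j i) else 0)) := by
  rw [hC l j, hC l i, hC k j, hC k i]
  rcases eq_or_ne i k with h1 | h1 <;> rcases eq_or_ne j l with h2 | h2 <;>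
    rcases eq_or_ne i l with h3 | h3 <;> rcases eq_or_ne j k with h4 | h4 <;>
    rcases eq_or_ne i j with h5 | h5 <;> rcases eq_or_ne k l with h6 | h6 <;>
    subst_vars <;>
    simp_all [eq_comm] <;>
    ring

lemma Lam_apply (μ : Fin N → ℝ) (hb : ℝ) (a b : Fin N) (g : (Fin N → ℝ) → ℂ) (z : Fin N → ℝ) :
    Lam μ hb a b g z = -(Complex.I * (hb : ℂ)) * Wop μ a b g z := by
  simp only [Lam, Pop, Wop]
  ring

lemma Wop_const_mul (μ : Fin N → ℝ) (a b : Fin N) (c : ℂ) {g : (Fin N → ℝ) → ℂ} {x : Fin N → ℝ}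
    (hg : DifferentiableAt ℝ g x) :
    Wop μ a b (fun y => c * g y) x = c * Wop μ a b g x := by
  simp only [Wop, Dop_const_mul μ b c hg, Dop_const_mul μ a c hg]
  ring

lemma Wop_Lam (μ : Fin N → ℝ) (hb : ℝ) (a b c d : Fin N) {f : (Fin N → ℝ) → ℂ}
    (hf : ContDiffOn ℝ (⊤:ℕ∞) f (Udom N)) {x : Fin N → ℝ} (hx : x ∈ Udom N) :
    Wop μ a b (Lam μ hb c d f) x = -(Complex.I * (hb : ℂ)) * Wop μ a b (Wop μ c d f) x := by
  have hdiff : DifferentiableAt ℝ (Wop μ c d f) x := diffAt (smooth_Wop μ c d hf) hx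
  have e : Lam μ hb c d f = fun y => -(Complex.I * (hb : ℂ)) * Wop μ c d f y :=
    funext fun y => Lam_apply μ hb c d f y
  rw [e, Wop_const_mul μ a b _ hdiff]

end DunklAux

/-- Commutation relations of the Dunkl angular momentum operators:
`[Λ̂ᵢⱼ, Λ̂ₖₗ] = iℏ(δᵢₖ(1+2μₖR̂ₖ)Λ̂ⱼₗ + δⱼₗ(1+2μₗR̂ₗ)Λ̂ᵢₖ - δᵢₗ(1+2μᵢR̂ᵢ)Λ̂ⱼₖ - δⱼₖ(1+2μⱼR̂ⱼ)Λ̂ᵢₗ)`. -/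
theorem dunkl_angular_momentum_commutator (N : ℕ) (hN : 2 ≤ N) (μ : Fin N → ℝ)
    (hb : ℝ) (hbpos : hb > 0)
    (f : (Fin N → ℝ) → ℂ) (hf : ContDiffOn ℝ (⊤ : ℕ∞) f (Udom N)) :
    ∀ i j k l : Fin N, ∀ x ∈ Udom N,
      Lam μ hb i j (Lam μ hb k l f) x - Lam μ hb k l (Lam μ hb i j f) x
        = Complex.I * (hb : ℂ) *
          ((if i = k then Lam μ hb j l f x + 2 * (μ k : ℂ) * Rop k (Lam μ hb j l f) x else 0)
          + (if j = l then Lam μ hb i k f x + 2 * (μ l : ℂ) * Rop l (Lam μ hb i k f) x else 0)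
          - (if i = l then Lam μ hb j k f x + 2 * (μ i : ℂ) * Rop i (Lam μ hb j k f) x else 0)
          - (if j = k then Lam μ hb i l f x + 2 * (μ j : ℂ) * Rop j (Lam μ hb i l f) x else 0)) := by
  intro i j k l x hx
  classical
  have hf' : ContDiffOn ℝ (⊤:ℕ∞) f (Udom N) := hf.of_le (by simp)
  open DunklAux in
  have hkey := DunklAux.key_alg (fun m => ((x m : ℝ) : ℂ)) (fun m => Dop μ m f x)
    (fun m => ((μ m : ℝ) : ℂ)) (fun p m => Dop μ m f (flipC p x))
    (fun p q => Dop μ p (Dop μ q f) x)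
    (fun p q => DunklAux.Dop_comm μ hf' p q hx) i j k l
  have hw : DunklAux.Wop μ i j (DunklAux.Wop μ k l f) x
        - DunklAux.Wop μ k l (DunklAux.Wop μ i j f) x
      = -((if i = k then DunklAux.Wop μ j l f x
              + 2 * ((μ k : ℝ) : ℂ) * DunklAux.Wop μ j l f (flipC k x) else 0)
        + (if j = l then DunklAux.Wop μ i k f x
              + 2 * ((μ l : ℝ) : ℂ) * DunklAux.Wop μ i k f (flipC l x) else 0)
        - (if i = l then DunklAux.Wop μ j k f x
              + 2 * ((μ i : ℝ) : ℂ) * DunklAux.Wop μ j k f (flipC i x) else 0)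
        - (if j = k then DunklAux.Wop μ i l f x
              + 2 * ((μ j : ℝ) : ℂ) * DunklAux.Wop μ i l f (flipC j x) else 0)) := by
    have eL : DunklAux.Wop μ i j (DunklAux.Wop μ k l f) x
        = ((x i : ℝ) : ℂ) * Dop μ j (DunklAux.Wop μ k l f) x
          - ((x j : ℝ) : ℂ) * Dop μ i (DunklAux.Wop μ k l f) x := rfl
    have eR : DunklAux.Wop μ k l (DunklAux.Wop μ i j f) x
        = ((x k : ℝ) : ℂ) * Dop μ l (DunklAux.Wop μ i j f) x
          - ((x l : ℝ) : ℂ) * Dop μ k (DunklAux.Wop μ i j f) x := rfl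
    rw [eL, eR, DunklAux.Dop_Wop μ hf' j k l hx, DunklAux.Dop_Wop μ hf' i k l hx,
      DunklAux.Dop_Wop μ hf' l i j hx, DunklAux.Dop_Wop μ hf' k i j hx]
    simp only [DunklAux.Wop, DunklAux.flipC_coordC]
    exact hkey
  rw [DunklAux.Lam_apply μ hb i j (Lam μ hb k l f) x,
    DunklAux.Lam_apply μ hb k l (Lam μ hb i j f) x,
    DunklAux.Wop_Lam μ hb i j k l hf' hx, DunklAux.Wop_Lam μ hb k l i j hf' hx]
  simp only [Rop, DunklAux.Lam_apply]
  split_ifs at hw ⊢ <;>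
    linear_combination (Complex.I * (hb : ℂ))^2 * hw

end
end
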